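/- Let X = (X₁,...,X_m) be a non-degenerate wide-sense multi-self-similar ℝ^m-valued random field on T = [0,∞)^d with scaling exponents f_j(a) = ∏_{i=1}^d a_i^{H_i^{(j)}}, and suppose for some index j that H₁^{(j)} = 0 while H_i^{(j)} > 0 for all i ≥ 2. Then for every a₁ > 0, the field {X_j(a₁t₁, t₂,...,t_d), t ∈ T} has the same finite-dimensional distributions as {X_j(t₁,...,t_d), t ∈ T}, and consequently {X_j(t₁,t₂,...,t_d), t ∈ T} =_{f.d.d.} {X_j(0, t₂,...,t_d), t ∈ T}; i.e. X_j does not depend on the variable t₁. -/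

import Mathlib

/-!
Write `Y t := X_j(t)` and `A b := (b, 1, …, 1)`. Since `H₁^{(j)} = 0` we have `f_j(A b) = 1`,
so scaling time by `A b` only translates the f.d.d. of `Y` by `c b := g_j(A b)`. Iterating,
`Y(A (bⁿ))` has the law of `Y(1, …, 1)` translated by `n · c b`. For `b < 1` these random
variables converge in probability to `Y(A 0)`, and translates of a fixed law by an unbounded
amount cannot converge weakly, so `c b = 0`. Writing an arbitrary `b` as a quotient of two
scales in `(0, 1)` makes the law of `Y(1, …, 1)` invariant under translation by `c b`, hence
`c ≡ 0`, which is the first claim. The second follows by letting `a₁ → 0` in the first, using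
stochastic continuity once more.
-/

open MeasureTheory ProbabilityTheory Filter Topology Set

theorem Pi.mulSingle_mul_eq_update {ι M : Type*} [DecidableEq ι] [MulOneClass M]
    (i : ι) (a : M) (t : ι → M) :
    Pi.mulSingle i a * t = Function.update t i (a * t i) := by
  ext k
  rcases eq_or_ne k i with rfl | h <;> simp [*]

theorem Pi.mulSingle_nonneg {ι R : Type*} [DecidableEq ι] [Zero R] [One R] [Preorder R]
    [ZeroLEOneClass R] {i : ι} {a : R} (ha : 0 ≤ a) : 0 ≤ Pi.mulSingle (M := fun _ => R) i a :=
  fun k => by rcases eq_or_ne k i with rfl | h <;> simp [*]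

theorem Pi.mulSingle_pos {ι R : Type*} [DecidableEq ι] [Zero R] [One R] [PartialOrder R]
    [ZeroLEOneClass R] [NeZero (1 : R)] {i j : ι} {a : R} (ha : 0 < a) :
    0 < Pi.mulSingle (M := fun _ => R) i a j := by
  rcases eq_or_ne j i with rfl | h <;> simp [*]

theorem Finset.prod_mulSingle_rpow_eq_one {ι : Type*} [Fintype ι] [DecidableEq ι] {i₀ : ι}
    {H : ι → ℝ} (hH : H i₀ = 0) (b : ℝ) : ∏ i, (Pi.mulSingle i₀ b : ι → ℝ) i ^ H i = 1 :=
  Finset.prod_eq_one fun i _ => by rcases eq_or_ne i i₀ with rfl | h <;> simp [*]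

/-- Translates of a finite measure by an unbounded amount escape every ball, while by the
portmanteau theorem a weak limit would keep some ball charged. -/
theorem not_tendsto_abs_atTop_of_tendsto_map_add {μs : ℕ → ProbabilityMeasure ℝ}
    {μ : ProbabilityMeasure ℝ} (h : Tendsto μs atTop (𝓝 μ)) (ν : Measure ℝ) [IsFiniteMeasure ν]
    {r : ℕ → ℝ} (hμs : ∀ n, (μs n : Measure ℝ) = ν.map (· + r n)) :
    ¬ Tendsto (fun n => |r n|) atTop atTop := by
  intro hr
  obtain ⟨R, hR⟩ : ∃ R : ℕ, (μ : Measure ℝ) (Metric.ball 0 R) ≠ 0 := by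
    by_contra! h0
    simpa [Metric.iUnion_ball_nat] using measure_iUnion_null h0
  have htail : Tendsto (fun r : ℝ => ν {x | r < ‖x‖}) atTop (𝓝 0) := by
    simpa using tendsto_measure_norm_gt_of_isTightMeasureSet
      (isTightMeasureSet_singleton (μ := ν))
  have hball : Tendsto (fun n => (μs n : Measure ℝ) (Metric.ball 0 R)) atTop (𝓝 0) := by
    refine tendsto_of_tendsto_of_tendsto_of_le_of_le tendsto_const_nhds
      (htail.comp (tendsto_atTop_add_const_right _ (-(R : ℝ)) hr)) (fun _ => zero_le) fun n => ?_
    rw [hμs, Measure.map_apply (by fun_prop) Metric.isOpen_ball.measurableSet]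
    refine measure_mono fun x hx => ?_
    simp only [mem_preimage, Metric.mem_ball, dist_zero_right, Real.norm_eq_abs] at hx
    simp only [mem_ofPred_eq, Real.norm_eq_abs]
    have := abs_sub_abs_le_abs_sub (r n) (-x)
    rw [abs_neg, sub_neg_eq_add, add_comm] at this
    linarith
  have := ProbabilityMeasure.le_liminf_measure_open_of_tendsto h (G := Metric.ball 0 R)
    Metric.isOpen_ball
  rw [hball.liminf_eq] at this
  exact hR (le_zero_iff.1 this)

section RandomField

variable {Ω : Type*} [MeasurableSpace Ω] {P : Measure Ω}

theorem MeasureTheory.TendstoInMeasure.apply {α κ : Type*} [Fintype κ] {E : κ → Type*}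
    [∀ i, PseudoEMetricSpace (E i)] {l : Filter α} {F : α → Ω → ∀ i, E i} {G : Ω → ∀ i, E i}
    (h : TendstoInMeasure P F l G) (i : κ) :
    TendstoInMeasure P (fun n ω => F n ω i) l (fun ω => G ω i) := fun ε hε =>
  tendsto_of_tendsto_of_tendsto_of_le_of_le tendsto_const_nhds (h ε hε) (fun _ => zero_le)
    fun _ => measure_mono fun _ hω => hω.trans (edist_le_pi_edist _ _ i)

theorem MeasureTheory.tendstoInMeasure_pi {α κ : Type*} [Fintype κ] {E : κ → Type*}
    [∀ i, PseudoEMetricSpace (E i)] {l : Filter α} {F : α → Ω → ∀ i, E i} {G : Ω → ∀ i, E i}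
    (h : ∀ i, TendstoInMeasure P (fun n ω => F n ω i) l (fun ω => G ω i)) :
    TendstoInMeasure P F l G := by
  intro ε hε
  have hsub : ∀ n, {ω | ε ≤ edist (F n ω) (G ω)} ⊆ ⋃ i, {ω | ε ≤ edist (F n ω i) (G ω i)} := by
    intro n ω hω
    obtain ⟨i, -, hi⟩ := (Finset.le_sup_iff (bot_lt_iff_ne_bot.2 hε.ne')).1 hω
    exact mem_iUnion.2 ⟨i, hi⟩
  refine tendsto_of_tendsto_of_tendsto_of_le_of_le tendsto_const_nhds ?_ (fun _ => zero_le)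
    fun n => (measure_mono (hsub n)).trans (measure_iUnion_fintype_le _ _)
  simpa using tendsto_finsetSum Finset.univ fun i _ => h i ε hε

def StochasticallyContinuousOn {E β : Type*} [TopologicalSpace E] [EDist β]
    (P : Measure Ω) (Y : E → Ω → β) (s : Set E) : Prop :=
  ∀ t ∈ s, ∀ u : ℕ → E, (∀ n, u n ∈ s) → Tendsto u atTop (𝓝 t) →
    TendstoInMeasure P (fun n => Y (u n)) atTop (Y t)

theorem StochasticallyContinuousOn.apply {E κ : Type*} [TopologicalSpace E] [Fintype κ]
    {X : E → Ω → κ → ℝ} {s : Set E} (h : StochasticallyContinuousOn P X s) (j : κ) :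
    StochasticallyContinuousOn P (fun t ω => X t ω j) s :=
  fun t ht u hu hut => (h t ht u hu hut).apply j

variable [IsProbabilityMeasure P]

theorem MeasureTheory.TendstoInMeasure.map_eq_of_forall_map_eq {E : Type*}
    [PseudoEMetricSpace E] [MeasurableSpace E] [BorelSpace E] {F : ℕ → Ω → E} {G : Ω → E}
    (h : TendstoInMeasure P F atTop G) (hF : ∀ n, AEMeasurable (F n) P) {μ : Measure E}
    (hlaw : ∀ n, P.map (F n) = μ) : P.map G = μ := by
  rw [← hlaw 0]
  exact tendstoInDistribution_unique F (h.tendstoInDistribution hF)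
    (tendstoInDistribution_of_identDistrib 0 (fun n => ⟨hF 0, hF n, (hlaw 0).trans (hlaw n).symm⟩)
      (IdentDistrib.refl (hF 0)))

theorem eq_zero_of_tendstoInMeasure_of_map_succ_eq_map_add {Y : ℕ → Ω → ℝ} {Z : Ω → ℝ} {c : ℝ}
    (hY : ∀ n, AEMeasurable (Y n) P) (h : TendstoInMeasure P Y atTop Z)
    (hshift : ∀ n, P.map (Y (n + 1)) = (P.map (Y n)).map (· + c)) : c = 0 := by
  have hlaw : ∀ n : ℕ, P.map (Y n) = (P.map (Y 0)).map (· + n * c) := by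
    intro n
    induction n with
    | zero => simp
    | succ n ih =>
      rw [hshift, ih, Measure.map_map (by fun_prop) (by fun_prop)]
      congr 1
      ext x
      simp only [Function.comp_apply, Nat.cast_succ]
      ring
  by_contra hc
  refine not_tendsto_abs_atTop_of_tendsto_map_add (h.tendstoInDistribution hY).tendsto
    (P.map (Y 0)) hlaw ?_
  simpa [abs_mul] using tendsto_natCast_atTop_atTop.atTop_mul_const (abs_pos.2 hc)

end RandomField

theorem eq_zero_of_map_add_eq_self {ν : Measure ℝ} [IsProbabilityMeasure ν] {c : ℝ}
    (h : ν.map (· + c) = ν) : c = 0 :=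
  eq_zero_of_tendstoInMeasure_of_map_succ_eq_map_add (P := ν) (Y := fun _ => id)
    (fun _ => aemeasurable_id)
    (tendstoInMeasure_of_tendsto_ae (fun _ => aestronglyMeasurable_id)
      (ae_of_all _ fun _ => tendsto_const_nhds))
    (fun _ => by rw [Measure.map_id, h])

section ScalingOneCoordinate

variable {Ω ι : Type*} [MeasurableSpace Ω] {P : Measure Ω} [DecidableEq ι] {i₀ : ι}
  {Y : (ι → ℝ) → Ω → ℝ} {c : ℝ → ℝ}

theorem map_mulSingle_mul_eq_map_add (hYm : ∀ t, Measurable (Y t))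
    (hscale : ∀ b, 0 < b → ∀ (k : ℕ) (t : Fin k → ι → ℝ), (∀ i, 0 ≤ t i) →
      P.map (fun ω i => Y (Pi.mulSingle i₀ b * t i) ω) = P.map (fun ω i => Y (t i) ω + c b))
    {b : ℝ} (hb : 0 < b) {s : ι → ℝ} (hs : 0 ≤ s) :
    P.map (Y (Pi.mulSingle i₀ b * s)) = (P.map (Y s)).map (· + c b) := by
  have h := (IdentDistrib.mk (by fun_prop) (by fun_prop)
    (hscale b hb 1 (fun _ => s) fun _ => hs)).comp (measurable_pi_apply 0)
  rw [Measure.map_map (measurable_add_const _) (hYm s)]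
  exact h.map_eq

variable [IsProbabilityMeasure P]

theorem shift_eq_zero_of_lt_one (hYm : ∀ t, Measurable (Y t))
    (hY : StochasticallyContinuousOn P Y (Ici 0))
    (hshift : ∀ b, 0 < b → ∀ s, 0 ≤ s →
      P.map (Y (Pi.mulSingle i₀ b * s)) = (P.map (Y s)).map (· + c b))
    {b : ℝ} (hb0 : 0 < b) (hb1 : b < 1) : c b = 0 := by
  refine eq_zero_of_tendstoInMeasure_of_map_succ_eq_map_add
    (Y := fun n => Y (Pi.mulSingle i₀ (b ^ n))) (fun n => (hYm _).aemeasurable)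
    (hY (Pi.mulSingle i₀ 0) (Pi.mulSingle_nonneg le_rfl) _
      (fun n => Pi.mulSingle_nonneg (pow_nonneg hb0.le n)) ?_) fun n => ?_
  · exact ((continuous_mulSingle i₀).tendsto 0).comp
      (tendsto_pow_atTop_nhds_zero_of_lt_one hb0.le hb1)
  · rw [pow_succ', Pi.mulSingle_mul]
    exact hshift b hb0 _ (Pi.mulSingle_nonneg (pow_nonneg hb0.le n))

theorem shift_eq_zero (hYm : ∀ t, Measurable (Y t))
    (hY : StochasticallyContinuousOn P Y (Ici 0))
    (hshift : ∀ b, 0 < b → ∀ s, 0 ≤ s →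
      P.map (Y (Pi.mulSingle i₀ b * s)) = (P.map (Y s)).map (· + c b))
    {b : ℝ} (hb : 0 < b) : c b = 0 := by
  have hlaw : ∀ a, 0 < a → a < 1 → P.map (Y (Pi.mulSingle i₀ a)) = P.map (Y 1) := by
    intro a ha0 ha1
    simpa [shift_eq_zero_of_lt_one hYm hY hshift ha0 ha1] using hshift a ha0 1 zero_le_one
  have : IsProbabilityMeasure (P.map (Y 1)) := Measure.isProbabilityMeasure_map (hYm 1).aemeasurable
  have hb' : 0 < (b + 1)⁻¹ := by positivity
  -- `b` is the ratio of the scales `b * (b + 1)⁻¹` and `(b + 1)⁻¹`, both in `(0, 1)`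
  have h := hshift b hb (Pi.mulSingle i₀ (b + 1)⁻¹) (Pi.mulSingle_nonneg hb'.le)
  rw [← Pi.mulSingle_mul, hlaw _ (by positivity) ?_,
    hlaw _ hb' (inv_lt_one_of_one_lt₀ (by linarith))] at h
  · exact eq_zero_of_map_add_eq_self h.symm
  · rw [← div_eq_mul_inv, div_lt_one (by positivity)]
    linarith

theorem map_eq_map_update_zero {κ : Type*} [Fintype κ] (hYm : ∀ t, Measurable (Y t))
    (hY : StochasticallyContinuousOn P Y (Ici 0)) {t : κ → ι → ℝ} (ht : ∀ i, 0 ≤ t i)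
    (hinv : ∀ a, 0 < a →
      P.map (fun ω i => Y (Pi.mulSingle i₀ a * t i) ω) = P.map (fun ω i => Y (t i) ω)) :
    P.map (fun ω i => Y (t i) ω) = P.map (fun ω i => Y (Function.update (t i) i₀ 0) ω) := by
  have hconv : TendstoInMeasure P
      (fun (n : ℕ) ω i => Y (Pi.mulSingle i₀ (1 / ((n : ℝ) + 1)) * t i) ω)
      atTop (fun ω i => Y (Pi.mulSingle i₀ 0 * t i) ω) :=
    tendstoInMeasure_pi fun i => hY _ (mul_nonneg (Pi.mulSingle_nonneg le_rfl) (ht i)) _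
      (fun n => mul_nonneg (Pi.mulSingle_nonneg (by positivity)) (ht i))
      ((((continuous_mulSingle i₀).tendsto 0).comp
        tendsto_one_div_add_atTop_nhds_zero_nat).mul_const (t i))
  rw [← hconv.map_eq_of_forall_map_eq (fun n => by fun_prop) fun n => hinv _ (by positivity)]
  simp only [Pi.mulSingle_mul_eq_update, zero_mul]

end ScalingOneCoordinate

theorem stmt_12_general {d m : ℕ} [NeZero d] {Ω : Type*} [MeasurableSpace Ω]
    (P : Measure Ω) [IsProbabilityMeasure P]
    (X : (Fin d → ℝ) → Ω → (Fin m → ℝ))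
    (hXmeas : ∀ t, Measurable (X t))
    -- stochastic continuity on `[0,∞)^d`
    (hXcont : ∀ t : Fin d → ℝ, (∀ i, 0 ≤ t i) →
      ∀ u : ℕ → Fin d → ℝ, (∀ n i, 0 ≤ u n i) → Tendsto u atTop (𝓝 t) →
        TendstoInMeasure P (fun n => X (u n)) atTop (X t))
    (f : (Fin d → ℝ) → Fin m → ℝ) (g : (Fin d → ℝ) → Fin m → ℝ)
    -- wide-sense multi-self-similarity
    (hss : ∀ a : Fin d → ℝ, (∀ i, 0 < a i) →
      ∀ (k : ℕ) (t : Fin k → Fin d → ℝ), (∀ i i', 0 ≤ t i i') →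
        Measure.map (fun ω => fun i => X (a * t i) ω) P
          = Measure.map (fun ω => fun i => fun j => f a j * X (t i) ω j + g a j) P)
    (H : Fin m → Fin d → ℝ)
    (hf : ∀ a : Fin d → ℝ, (∀ i, 0 < a i) → ∀ j, f a j = ∏ i, a i ^ H j i)
    (j : Fin m)
    (hH0 : H j 0 = 0) :
    (∀ a₁ : ℝ, 0 < a₁ →
      ∀ (k : ℕ) (t : Fin k → Fin d → ℝ), (∀ i i', 0 ≤ t i i') →
        Measure.map (fun ω => fun i => X (Function.update (t i) 0 (a₁ * t i 0)) ω j) P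
          = Measure.map (fun ω => fun i => X (t i) ω j) P) ∧
    (∀ (k : ℕ) (t : Fin k → Fin d → ℝ), (∀ i i', 0 ≤ t i i') →
      Measure.map (fun ω => fun i => X (t i) ω j) P
        = Measure.map (fun ω => fun i => X (Function.update (t i) 0 0) ω j) P) := by
  set Y : (Fin d → ℝ) → Ω → ℝ := fun t ω => X t ω j
  have hYm : ∀ t, Measurable (Y t) := fun t => (measurable_pi_apply j).comp (hXmeas t)
  have hY : StochasticallyContinuousOn P Y (Ici 0) :=
    StochasticallyContinuousOn.apply (fun t ht u hu => hXcont t ht u fun n => hu n) j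
  have hscale : ∀ b, 0 < b → ∀ (k : ℕ) (t : Fin k → Fin d → ℝ), (∀ i, 0 ≤ t i) →
      P.map (fun ω i => Y (Pi.mulSingle 0 b * t i) ω)
        = P.map (fun ω i => Y (t i) ω + g (Pi.mulSingle 0 b) j) := by
    intro b hb k t ht
    have h := (IdentDistrib.mk (by fun_prop) (by fun_prop)
      (hss (Pi.mulSingle 0 b) (fun _ => Pi.mulSingle_pos hb) k t fun i => ht i)).comp
      (u := fun v i => v i j) (by fun_prop)
    simpa [Function.comp_def, hf _ (fun _ => Pi.mulSingle_pos hb),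
      Finset.prod_mulSingle_rpow_eq_one hH0] using h.map_eq
  have hinv : ∀ b, 0 < b → ∀ (k : ℕ) (t : Fin k → Fin d → ℝ), (∀ i, 0 ≤ t i) →
      P.map (fun ω i => Y (Pi.mulSingle 0 b * t i) ω) = P.map (fun ω i => Y (t i) ω) := by
    intro b hb k t ht
    have hc := shift_eq_zero hYm hY
      (fun _ hb _ hs => map_mulSingle_mul_eq_map_add hYm hscale hb hs) hb
    simpa [hc] using hscale b hb k t ht
  refine ⟨fun a₁ ha₁ k t ht => ?_, fun k t ht =>
    map_eq_map_update_zero hYm hY (fun i => ht i) fun a ha => hinv a ha k t fun i => ht i⟩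
  simpa [Pi.mulSingle_mul_eq_update] using hinv a₁ ha₁ k t fun i => ht i

/-- Let `X` be a non-degenerate wide-sense multi-self-similar
`ℝ^m`-valued random field on `T = [0,∞)^d` with scaling functions
`f_j(a) = ∏_i a_i^{H_i^{(j)}}`, and suppose for some index `j` that
`H₁^{(j)} = 0` while `H_i^{(j)} > 0` for all `i ≥ 2`. Then for every `a₁ > 0`
the field `{X_j(a₁t₁, t₂,...,t_d)}` has the same f.d.d. as `{X_j(t₁,...,t_d)}`,
and consequently `{X_j(t)} =_{f.d.d.} {X_j(0,t₂,...,t_d)}`. -/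
theorem stmt_12 {d m : ℕ} [NeZero d] {Ω : Type*} [MeasurableSpace Ω]
    (P : Measure Ω) [IsProbabilityMeasure P]
    (X : (Fin d → ℝ) → Ω → (Fin m → ℝ))
    (hXmeas : ∀ t, Measurable (X t))
    -- stochastic continuity on `[0,∞)^d`
    (hXcont : ∀ t : Fin d → ℝ, (∀ i, 0 ≤ t i) →
      ∀ u : ℕ → Fin d → ℝ, (∀ n i, 0 ≤ u n i) → Tendsto u atTop (𝓝 t) →
        TendstoInMeasure P (fun n => X (u n)) atTop (X t))
    (f : (Fin d → ℝ) → Fin m → ℝ) (g : (Fin d → ℝ) → Fin m → ℝ)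
    -- wide-sense multi-self-similarity
    (hss : ∀ a : Fin d → ℝ, (∀ i, 0 < a i) →
      ∀ (k : ℕ) (t : Fin k → Fin d → ℝ), (∀ i i', 0 ≤ t i i') →
        Measure.map (fun ω => fun i => X (a * t i) ω) P
          = Measure.map (fun ω => fun i => fun j => f a j * X (t i) ω j + g a j) P)
    -- non-degeneracy: `X_j(1,...,1)` is not a.s. constant
    (hnd : ∀ j, ¬ ∃ c : ℝ, ∀ᵐ ω ∂P, X (fun _ => 1) ω j = c)
    (H : Fin m → Fin d → ℝ)
    (hf : ∀ a : Fin d → ℝ, (∀ i, 0 < a i) → ∀ j, f a j = ∏ i, a i ^ H j i)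
    (j : Fin m)
    (hH0 : H j 0 = 0)
    (hHpos : ∀ i : Fin d, i ≠ 0 → 0 < H j i) :
    (∀ a₁ : ℝ, 0 < a₁ →
      ∀ (k : ℕ) (t : Fin k → Fin d → ℝ), (∀ i i', 0 ≤ t i i') →
        Measure.map (fun ω => fun i => X (Function.update (t i) 0 (a₁ * t i 0)) ω j) P
          = Measure.map (fun ω => fun i => X (t i) ω j) P) ∧
    (∀ (k : ℕ) (t : Fin k → Fin d → ℝ), (∀ i i', 0 ≤ t i i') →
      Measure.map (fun ω => fun i => X (t i) ω j) P
        = Measure.map (fun ω => fun i => X (Function.update (t i) 0 0) ω j) P) :=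
  stmt_12_general P X hXmeas hXcont f g hss H hf j hH0
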